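/- Let X be a finite poset with l(X) ≤ 2 (no chain of length > 2) and K a field. Then every totally compatible structure * on (J(I(X,K)),·) is annihilator-valued, i.e. J*J ⊆ Ann(J,·) and (J·J)*J = J*(J·J) = {0}. Conversely, if l(X) > 2, the incidence product · itself is a totally compatible structure that is not annihilator-valued. -/
import Mathlib


open scoped Classical

/-- Pairs `x < y` in `X`, indexing the natural basis of `J(I(X,K))`. -/
abbrev IncPair (X : Type*) [PartialOrder X] := {p : X × X // p.1 < p.2}

/-- The Jacobson radical `J(I(X,K))` of the incidence algebra of a finite
poset `X` over `K`, identified with the functions on `{(x,y) : x < y}`. -/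
abbrev JRad (X K : Type*) [PartialOrder X] [Field K] := IncPair X → K

/-- The natural basis element `e_{xy}` of `J(I(X,K))`, for `x < y`. -/
noncomputable def e {X K : Type*} [PartialOrder X] [Field K]
    (x y : X) (_h : x < y) : JRad X K :=
  fun r => if r.1 = (x, y) then 1 else 0

/-- The incidence-algebra product on `J(I(X,K))`:
`e_{xy} · e_{uv} = δ_{yu} e_{xv}`. -/
noncomputable def jmul {X K : Type*} [PartialOrder X] [Fintype X] [Field K]
    (f g : JRad X K) : JRad X K :=
  fun r => ∑ z : X, if h : r.1.1 < z ∧ z < r.1.2 then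
    f ⟨(r.1.1, z), h.1⟩ * g ⟨(z, r.1.2), h.2⟩ else 0

/-- `σ : X²_< → K` is constant on chains. -/
def ConstOnChains {X K : Type*} [PartialOrder X] [Field K]
    (σ : IncPair X → K) : Prop :=
  ∀ p q : IncPair X,
    (∃ C : Set X, IsChain (· ≤ ·) C ∧
      p.1.1 ∈ C ∧ p.1.2 ∈ C ∧ q.1.1 ∈ C ∧ q.1.2 ∈ C) → σ p = σ q

def TotComp {V : Type*} (m₁ m₂ : V → V → V) : Prop :=
  ∀ a b c : V, m₂ (m₁ a b) c = m₁ (m₂ a b) c ∧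
    m₁ (m₂ a b) c = m₁ a (m₂ b c) ∧
    m₁ a (m₂ b c) = m₂ a (m₁ b c)

def IsAssoc {V : Type*} (m : V → V → V) : Prop :=
  ∀ a b c : V, m (m a b) c = m a (m b c)

/-- `m` is an annihilator-valued product with respect to `mul`:
the image of `m` lies in the annihilator of `mul`, and `m` kills products. -/
def AnnValuedProd {V : Type*} (mul m : V → V → V) (zero : V) : Prop :=
  (∀ a b c : V, mul (m a b) c = zero ∧ mul c (m a b) = zero) ∧
  (∀ a b c : V, m (mul a b) c = zero ∧ m c (mul a b) = zero)

section helpers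
variable {X K : Type*} [PartialOrder X] [Fintype X] [Field K]

noncomputable def JmulL : JRad X K →ₗ[K] JRad X K →ₗ[K] JRad X K :=
  LinearMap.mk₂ K jmul
    (fun f f' g => funext fun r => by
      simp only [jmul, Pi.add_apply, ← Finset.sum_add_distrib]
      exact Finset.sum_congr rfl fun z _ => by split <;> simp [add_mul])
    (fun k f g => funext fun r => by
      simp only [jmul, Pi.smul_apply, smul_eq_mul, Finset.mul_sum]
      exact Finset.sum_congr rfl fun z _ => by split <;> simp [mul_assoc])
    (fun f g g' => funext fun r => by
      simp only [jmul, Pi.add_apply, ← Finset.sum_add_distrib]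
      exact Finset.sum_congr rfl fun z _ => by split <;> simp [mul_add])
    (fun k f g => funext fun r => by
      simp only [jmul, Pi.smul_apply, smul_eq_mul, Finset.mul_sum]
      exact Finset.sum_congr rfl fun z _ => by split <;> simp [mul_left_comm])

lemma jmulL_apply (f g : JRad X K) : JmulL f g = jmul f g := rfl

lemma jmul_e_left (x y : X) (hxy : x < y) (f : JRad X K) (r : IncPair X) :
    jmul (e x y hxy) f r =
      if h : r.1.1 = x ∧ y < r.1.2 then f ⟨(y, r.1.2), h.2⟩ else 0 := by
  rw [jmul, Finset.sum_eq_single y]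
  · by_cases hp : r.1.1 = x
    · by_cases hq : y < r.1.2
      · rw [dif_pos (show r.1.1 < y ∧ y < r.1.2 from ⟨hp ▸ hxy, hq⟩),
          dif_pos (show r.1.1 = x ∧ y < r.1.2 from ⟨hp, hq⟩)]
        simp [e, hp]
      · rw [dif_neg (show ¬(r.1.1 < y ∧ y < r.1.2) from fun h => hq h.2),
          dif_neg (show ¬(r.1.1 = x ∧ y < r.1.2) from fun h => hq h.2)]
    · rw [dif_neg (show ¬(r.1.1 = x ∧ y < r.1.2) from fun h => hp h.1)]
      split
      · rename_i h
        have : e (K := K) x y hxy ⟨(r.1.1, y), h.1⟩ = 0 := by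
          simp [e, Prod.ext_iff, hp]
        rw [this, zero_mul]
      · rfl
  · intro z _ hz
    split
    · rename_i h
      have : e (K := K) x y hxy ⟨(r.1.1, z), h.1⟩ = 0 := by
        simp [e, Prod.ext_iff, hz]
      rw [this, zero_mul]
    · rfl
  · exact fun h => absurd (Finset.mem_univ y) h

lemma jmul_e_right (z w : X) (hzw : z < w) (f : JRad X K) (r : IncPair X) :
    jmul f (e z w hzw) r =
      if h : r.1.2 = w ∧ r.1.1 < z then f ⟨(r.1.1, z), h.2⟩ else 0 := by
  rw [jmul, Finset.sum_eq_single z]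
  · by_cases hq : r.1.2 = w
    · by_cases hp : r.1.1 < z
      · rw [dif_pos (show r.1.1 < z ∧ z < r.1.2 from ⟨hp, hq ▸ hzw⟩),
          dif_pos (show r.1.2 = w ∧ r.1.1 < z from ⟨hq, hp⟩)]
        simp [e, hq]
      · rw [dif_neg (show ¬(r.1.1 < z ∧ z < r.1.2) from fun h => hp h.1),
          dif_neg (show ¬(r.1.2 = w ∧ r.1.1 < z) from fun h => hp h.2)]
    · rw [dif_neg (show ¬(r.1.2 = w ∧ r.1.1 < z) from fun h => hq h.1)]
      split
      · rename_i h
        have : e (K := K) z w hzw ⟨(z, r.1.2), h.2⟩ = 0 := by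
          simp [e, Prod.ext_iff, hq]
        rw [this, mul_zero]
      · rfl
  · intro u _ hu
    split
    · rename_i h
      have : e (K := K) z w hzw ⟨(u, r.1.2), h.2⟩ = 0 := by
        simp [e, Prod.ext_iff, hu]
      rw [this, mul_zero]
    · rfl
  · exact fun h => absurd (Finset.mem_univ z) h

lemma jmul_e_e_ne {x y u v : X} (hxy : x < y) (huv : u < v) (hyu : y ≠ u) :
    jmul (e x y hxy) (e (K := K) u v huv) = 0 := by
  funext r
  rw [jmul_e_left]
  split
  · rename_i h
    simp [e, Prod.ext_iff, hyu]
  · rfl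

lemma jmul_e_e_eq {x y v : X} (hxy : x < y) (hyv : y < v) :
    jmul (e x y hxy) (e (K := K) y v hyv) = e x v (hxy.trans hyv) := by
  funext r
  rw [jmul_e_left]
  by_cases h : r.1.1 = x ∧ v = r.1.2
  · rw [dif_pos ⟨h.1, h.2 ▸ hyv⟩]
    simp [e, Prod.ext_iff, h.1, h.2.symm]
  · by_cases h1 : r.1.1 = x ∧ y < r.1.2
    · rw [dif_pos h1]
      have h2 : ¬ (r.1.2 = v) := fun hh => h ⟨h1.1, hh.symm⟩
      simp [e, Prod.ext_iff, h2]
    · rw [dif_neg h1]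
      have : ¬ r.1 = (x, v) := by
        intro hh
        exact h ⟨congrArg Prod.fst hh, (congrArg Prod.snd hh).symm⟩
      simp [e, this]

lemma e_decomp (f : JRad X K) : f = ∑ r : IncPair X, f r • e r.1.1 r.1.2 r.2 := by
  funext s
  rw [Finset.sum_apply, Finset.sum_eq_single s]
  · simp [e]
  · intro r _ hr
    have : ¬ s.1 = (r.1.1, r.1.2) := fun hh =>
      hr (Subtype.ext ((Prod.mk.eta (p := r.1)).symm.trans hh.symm))
    simp [e, this]
  · exact fun h => absurd (Finset.mem_univ s) h

lemma apply_decomp (L : JRad X K →ₗ[K] JRad X K) (c : JRad X K) (t : IncPair X) :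
    L c t = ∑ s : IncPair X, c s * L (e s.1.1 s.1.2 s.2) t := by
  conv_lhs => rw [e_decomp c]
  rw [map_sum, Finset.sum_apply]
  exact Finset.sum_congr rfl fun s _ => by simp

lemma bilin_decomp (B : JRad X K →ₗ[K] JRad X K →ₗ[K] JRad X K) (f g : JRad X K) :
    B f g = ∑ r : IncPair X, ∑ s : IncPair X,
      (f r * g s) • B (e r.1.1 r.1.2 r.2) (e s.1.1 s.1.2 s.2) := by
  conv_lhs => rw [e_decomp f, e_decomp g]
  simp only [map_sum, map_smul, LinearMap.sum_apply, LinearMap.smul_apply,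
    Finset.smul_sum, smul_smul]
  rw [Finset.sum_comm]
  exact Finset.sum_congr rfl fun r _ => Finset.sum_congr rfl fun s _ => by
    rw [mul_comm]

lemma jmul_sum_left {ι : Type*} (t : Finset ι) (F : ι → JRad X K) (c : JRad X K) :
    jmul (∑ i ∈ t, F i) c = ∑ i ∈ t, jmul (F i) c := by
  rw [show jmul (∑ i ∈ t, F i) c = JmulL (∑ i ∈ t, F i) c from rfl, map_sum,
    LinearMap.sum_apply]
  rfl

lemma jmul_sum_right {ι : Type*} (t : Finset ι) (F : ι → JRad X K) (c : JRad X K) :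
    jmul c (∑ i ∈ t, F i) = ∑ i ∈ t, jmul c (F i) := by
  rw [show jmul c (∑ i ∈ t, F i) = JmulL c (∑ i ∈ t, F i) from rfl, map_sum]
  rfl

lemma jmul_smul_left (k : K) (f c : JRad X K) :
    jmul (k • f) c = k • jmul f c := by
  rw [show jmul (k • f) c = JmulL (k • f) c from rfl, map_smul, LinearMap.smul_apply]
  rfl

lemma jmul_smul_right (k : K) (f c : JRad X K) :
    jmul c (k • f) = k • jmul c f := by
  rw [show jmul c (k • f) = JmulL c (k • f) from rfl, map_smul]
  rfl

lemma apply_decomp₁ (B : JRad X K →ₗ[K] JRad X K →ₗ[K] JRad X K)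
    (c g : JRad X K) (t : IncPair X) :
    B c g t = ∑ s : IncPair X, c s * B (e s.1.1 s.1.2 s.2) g t := by
  conv_lhs => rw [e_decomp c]
  rw [map_sum, LinearMap.sum_apply, Finset.sum_apply]
  exact Finset.sum_congr rfl fun s _ => by simp

lemma jmul_assoc (f g h : JRad X K) :
    jmul (jmul f g) h = jmul f (jmul g h) := by
  funext r
  obtain ⟨⟨p, q⟩, hpq⟩ := r
  show (∑ z : X, if hz : p < z ∧ z < q then
      (∑ w : X, if hw : p < w ∧ w < z then f ⟨(p, w), hw.1⟩ * g ⟨(w, z), hw.2⟩ else 0) *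
        h ⟨(z, q), hz.2⟩ else 0)
    = (∑ w : X, if hw : p < w ∧ w < q then
      f ⟨(p, w), hw.1⟩ *
        (∑ z : X, if hz : w < z ∧ z < q then g ⟨(w, z), hz.1⟩ * h ⟨(z, q), hz.2⟩ else 0)
      else 0)
  have L : (∑ z : X, if hz : p < z ∧ z < q then
      (∑ w : X, if hw : p < w ∧ w < z then f ⟨(p, w), hw.1⟩ * g ⟨(w, z), hw.2⟩ else 0) *
        h ⟨(z, q), hz.2⟩ else 0)
    = ∑ z : X, ∑ w : X, if hc : p < w ∧ w < z ∧ z < q then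
        f ⟨(p, w), hc.1⟩ * g ⟨(w, z), hc.2.1⟩ * h ⟨(z, q), hc.2.2⟩ else 0 := by
    refine Finset.sum_congr rfl fun z _ => ?_
    by_cases hz : p < z ∧ z < q
    · rw [dif_pos hz, Finset.sum_mul]
      refine Finset.sum_congr rfl fun w _ => ?_
      by_cases hw : p < w ∧ w < z
      · rw [dif_pos hw, dif_pos (show p < w ∧ w < z ∧ z < q from ⟨hw.1, hw.2, hz.2⟩)]
      · rw [dif_neg hw, dif_neg (show ¬(p < w ∧ w < z ∧ z < q) from
          fun hc => hw ⟨hc.1, hc.2.1⟩), zero_mul]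
    · rw [dif_neg hz]
      exact (Finset.sum_eq_zero fun w _ => dif_neg (fun hc =>
        hz ⟨hc.1.trans hc.2.1, hc.2.2⟩)).symm
  have R : (∑ w : X, if hw : p < w ∧ w < q then
      f ⟨(p, w), hw.1⟩ *
        (∑ z : X, if hz : w < z ∧ z < q then g ⟨(w, z), hz.1⟩ * h ⟨(z, q), hz.2⟩ else 0)
      else 0)
    = ∑ w : X, ∑ z : X, if hc : p < w ∧ w < z ∧ z < q then
        f ⟨(p, w), hc.1⟩ * g ⟨(w, z), hc.2.1⟩ * h ⟨(z, q), hc.2.2⟩ else 0 := by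
    refine Finset.sum_congr rfl fun w _ => ?_
    by_cases hw : p < w ∧ w < q
    · rw [dif_pos hw, Finset.mul_sum]
      refine Finset.sum_congr rfl fun z _ => ?_
      by_cases hz : w < z ∧ z < q
      · rw [dif_pos hz, dif_pos (show p < w ∧ w < z ∧ z < q from ⟨hw.1, hz.1, hz.2⟩),
          mul_assoc]
      · rw [dif_neg hz, dif_neg (show ¬(p < w ∧ w < z ∧ z < q) from
          fun hc => hz ⟨hc.2.1, hc.2.2⟩), mul_zero]
    · rw [dif_neg hw]
      exact (Finset.sum_eq_zero fun z _ => dif_neg (fun hc =>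
        hw ⟨hc.1, hc.2.1.trans hc.2.2⟩)).symm
  rw [L, R, Finset.sum_comm]

end helpers

section main
variable {X K : Type*} [PartialOrder X] [Fintype X] [Field K]
variable (no4 : ¬ ∃ a b c d : X, a < b ∧ b < c ∧ c < d)
variable (m : JRad X K →ₗ[K] JRad X K →ₗ[K] JRad X K)
variable (tc : TotComp jmul (fun f g => m f g))

include tc in
lemma killL (h k : JRad X K) (hk0 : jmul h k = 0) (x y q : X)
    (hxy : x < y) (hyq : y < q) : m h k ⟨(y, q), hyq⟩ = 0 := by
  have h1 : jmul (e x y hxy) (m h k) = 0 := by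
    rw [(tc (e x y hxy) h k).2.2, hk0]
    exact map_zero (m (e x y hxy))
  have h2 := congrFun h1 ⟨(x, q), hxy.trans hyq⟩
  rw [jmul_e_left] at h2
  rw [dif_pos (show (x, q).1 = x ∧ y < (x, q).2 from ⟨rfl, hyq⟩)] at h2
  exact h2

include tc in
lemma killR (h k : JRad X K) (hk0 : jmul h k = 0) (p z w : X)
    (hpz : p < z) (hzw : z < w) : m h k ⟨(p, z), hpz⟩ = 0 := by
  have h1 : jmul (m h k) (e z w hzw) = 0 := by
    rw [← (tc h k (e z w hzw)).1, hk0]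
    show (m 0) (e z w hzw) = 0
    rw [map_zero]
    rfl
  have h2 := congrFun h1 ⟨(p, w), hpz.trans hzw⟩
  rw [jmul_e_right] at h2
  rw [dif_pos (show (p, w).2 = w ∧ (p, w).1 < z from ⟨rfl, hpz⟩)] at h2
  exact h2

include no4 tc in
lemma innerL (v x y q : X) (hxy : x < y) (hyv : y < v) (hyq : y < q)
    (c : JRad X K) : m (e y v hyv) c ⟨(y, q), hyq⟩ = 0 := by
  rw [apply_decomp (m (e y v hyv)) c]
  refine Finset.sum_eq_zero fun t _ => ?_
  by_cases hvz : v = t.1.1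
  · exact absurd ⟨x, y, v, t.1.2, hxy, hyv, hvz ▸ t.2⟩ no4
  · rw [killL m tc (e y v hyv) (e t.1.1 t.1.2 t.2)
      (jmul_e_e_ne hyv t.2 hvz) x y q hxy hyq, mul_zero]

include no4 tc in
lemma innerR (x y v p : X) (hxy : x < y) (hyv : y < v) (hpy : p < y)
    (c : JRad X K) : m c (e x y hxy) ⟨(p, y), hpy⟩ = 0 := by
  rw [apply_decomp₁ m c (e x y hxy)]
  refine Finset.sum_eq_zero fun t _ => ?_
  by_cases hwx : t.1.2 = x
  · exact absurd ⟨t.1.1, x, y, v, hwx ▸ t.2, hxy, hyv⟩ no4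
  · rw [killR m tc (e t.1.1 t.1.2 t.2) (e x y hxy)
      (jmul_e_e_ne t.2 hxy hwx) p y v hpy hyv, mul_zero]

include no4 tc in
lemma key1 (r s : IncPair X) (c : JRad X K) :
    jmul (m (e r.1.1 r.1.2 r.2) (e s.1.1 s.1.2 s.2)) c = 0 := by
  obtain ⟨⟨x, y⟩, hxy⟩ := r
  obtain ⟨⟨u, v⟩, huv⟩ := s
  by_cases hyu : y = u
  · subst hyu
    have h2 : jmul (m (e x y hxy) (e y v huv)) c
        = jmul (e x y hxy) (m (e y v huv) c) := (tc (e x y hxy) (e y v huv) c).2.1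
    rw [h2]
    funext t
    rw [jmul_e_left]
    split
    · rename_i hcond
      exact innerL no4 m tc v x y t.1.2 hxy huv hcond.2 c
    · rfl
  · have h0 : jmul (e x y hxy) (e (K := K) u v huv) = 0 := jmul_e_e_ne hxy huv hyu
    calc jmul (m (e x y hxy) (e u v huv)) c
        = m (jmul (e x y hxy) (e u v huv)) c := ((tc (e x y hxy) (e u v huv) c).1).symm
      _ = 0 := by rw [h0, map_zero, LinearMap.zero_apply]

include no4 tc in
lemma key2 (r s : IncPair X) (c : JRad X K) :
    jmul c (m (e r.1.1 r.1.2 r.2) (e s.1.1 s.1.2 s.2)) = 0 := by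
  obtain ⟨⟨x, y⟩, hxy⟩ := r
  obtain ⟨⟨u, v⟩, huv⟩ := s
  by_cases hyu : y = u
  · subst hyu
    have h2 : jmul c (m (e x y hxy) (e y v huv))
        = jmul (m c (e x y hxy)) (e y v huv) := ((tc c (e x y hxy) (e y v huv)).2.1).symm
    rw [h2]
    funext t
    rw [jmul_e_right]
    split
    · rename_i hcond
      exact innerR no4 m tc x y v t.1.1 hxy huv hcond.2 c
    · rfl
  · have h0 : jmul (e x y hxy) (e (K := K) u v huv) = 0 := jmul_e_e_ne hxy huv hyu
    calc jmul c (m (e x y hxy) (e u v huv))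
        = m c (jmul (e x y hxy) (e u v huv)) := (tc c (e x y hxy) (e u v huv)).2.2
      _ = 0 := by rw [h0, map_zero]

include no4 tc in
lemma Ann1 (f g c : JRad X K) : jmul (m f g) c = 0 := by
  rw [bilin_decomp m f g, jmul_sum_left]
  refine Finset.sum_eq_zero fun r _ => ?_
  rw [jmul_sum_left]
  refine Finset.sum_eq_zero fun s _ => ?_
  rw [jmul_smul_left, key1 no4 m tc, smul_zero]

include no4 tc in
lemma Ann2 (f g c : JRad X K) : jmul c (m f g) = 0 := by
  rw [bilin_decomp m f g, jmul_sum_right]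
  refine Finset.sum_eq_zero fun r _ => ?_
  rw [jmul_sum_right]
  refine Finset.sum_eq_zero fun s _ => ?_
  rw [jmul_smul_right, key2 no4 m tc, smul_zero]

end main

theorem stmt19 {X K : Type*} [PartialOrder X] [Fintype X] [Field K] :
    ((¬ ∃ a b c d : X, a < b ∧ b < c ∧ c < d) →
      ∀ m : JRad X K →ₗ[K] JRad X K →ₗ[K] JRad X K,
        IsAssoc (fun f g => m f g) →
        TotComp jmul (fun f g => m f g) →
        AnnValuedProd jmul (fun f g => m f g) 0) ∧
    ((∃ a b c d : X, a < b ∧ b < c ∧ c < d) →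
      (IsAssoc (jmul (X := X) (K := K)) ∧ TotComp (jmul (X := X) (K := K)) jmul) ∧
        ¬ AnnValuedProd (jmul (X := X) (K := K)) jmul 0) := by
  constructor
  · intro no4 m _ tc
    constructor
    · intro a b c
      exact ⟨Ann1 no4 m tc a b c, Ann2 no4 m tc a b c⟩
    · intro a b c
      constructor
      · exact (tc a b c).1.trans (Ann1 no4 m tc a b c)
      · exact ((tc c a b).2.2).symm.trans (Ann2 no4 m tc a b c)
  · rintro ⟨a, b, c, d, hab, hbc, hcd⟩
    refine ⟨⟨jmul_assoc, fun f g h => ⟨rfl, jmul_assoc f g h, rfl⟩⟩, fun hAnn => ?_⟩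
    have h0 := (hAnn.1 (e a b hab) (e b c hbc) (e c d hcd)).1
    rw [jmul_e_e_eq hab hbc, jmul_e_e_eq (hab.trans hbc) hcd] at h0
    have h1 := congrFun h0 ⟨(a, d), (hab.trans hbc).trans hcd⟩
    simp [e] at h1
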